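/- Let f : X → X be a homeomorphism of an infinite compact metric space X. Then for every δ > 0 and every integer m ≥ 4 there is a set A ⊆ X with |A| = m such that |f^k(A)|_δ < |A| for all k ∈ ℤ. -/
import Mathlib


variable {X : Type*} [MetricSpace X]

/-- The `k`-th iterate (`k ∈ ℤ`) of a homeomorphism, as a function. -/
noncomputable def hiter (f : X ≃ₜ X) (k : ℤ) : X → X := ⇑(f.toEquiv ^ k)

/-- A set is `δ`-separated if distinct points are at distance `> δ`. -/
def IsSeparated' (δ : ℝ) (B : Set X) : Prop :=
  ∀ x ∈ B, ∀ y ∈ B, x ≠ y → δ < dist x y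

/-- The `δ`-cardinality of a set: sup of cardinalities of `δ`-separated subsets. -/
noncomputable def dCard (δ : ℝ) (A : Set X) : ℕ∞ :=
  ⨆ B ∈ {B : Set X | B ⊆ A ∧ IsSeparated' δ B}, B.encard

/-- `(m,n)`-expansiveness with a given expansive constant `δ`. -/
def MNExpansiveWith (f : X ≃ₜ X) (m n : ℕ) (δ : ℝ) : Prop :=
  ∀ A : Set X, A.encard = m → ∃ k : ℤ, (n : ℕ∞) < dCard δ (hiter f k '' A)

/-- `(m,n)`-expansiveness. -/
def MNExpansive (f : X ≃ₜ X) (m n : ℕ) : Prop :=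
  ∃ δ > 0, MNExpansiveWith f m n δ

open Set Filter Topology Metric

section Aux

/-- cancellation of iterates of a homeomorphism -/
lemma iter_cancel (f : X ≃ₜ X) : ∀ (a : ℕ) {b : ℕ}, a ≤ b → ∀ z : X,
    (⇑f.symm)^[a] ((⇑f)^[b] z) = (⇑f)^[b - a] z := by
  intro a
  induction a with
  | zero => intro b _ z; simp
  | succ a ih =>
    intro b hab z
    have hab' : a ≤ b := (Nat.le_succ a).trans hab
    have hb : b - a = (b - (a + 1)) + 1 := by omega
    rw [Function.iterate_succ_apply', ih hab', hb, Function.iterate_succ_apply',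
      Homeomorph.symm_apply_apply]

lemma iter_cancel' (f : X ≃ₜ X) (a : ℕ) {b : ℕ} (hab : a ≤ b) (z : X) :
    (⇑f)^[a] ((⇑f.symm)^[b] z) = (⇑f.symm)^[b - a] z := by
  have := iter_cancel f.symm a hab z
  rwa [Homeomorph.symm_symm] at this

variable [CompactSpace X]

/-- a finite `ε`-net -/
lemma exists_net (ε : ℝ) (hε : 0 < ε) :
    ∃ t : Set X, t.Finite ∧ ∀ z : X, ∃ c ∈ t, dist z c ≤ ε := by
  obtain ⟨t, htf, hcov⟩ := totallyBounded_iff.1 (isCompact_univ : IsCompact (Set.univ : Set X)).totallyBounded ε hε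
  refine ⟨t, htf, fun z => ?_⟩
  have hz := hcov (mem_univ z)
  simp only [mem_iUnion, Metric.mem_ball] at hz
  obtain ⟨c, hc, hd⟩ := hz
  exact ⟨c, hc, hd.le⟩

lemma exists_close_pair [Infinite X] (ε : ℝ) (hε : 0 < ε) :
    ∃ x y : X, x ≠ y ∧ dist x y ≤ ε := by
  obtain ⟨t, htf, hnet⟩ := exists_net (X := X) (ε / 2) (by positivity)
  haveI := htf.to_subtype
  choose c hc hd using hnet
  obtain ⟨x, y, hxy, hcxy⟩ :=
    Finite.exists_ne_map_eq_of_infinite (fun z : X => (⟨c z, hc z⟩ : t))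
  have hcc : c x = c y := congrArg Subtype.val hcxy
  refine ⟨x, y, hxy, ?_⟩
  calc dist x y ≤ dist x (c x) + dist (c x) y := dist_triangle _ _ _
    _ ≤ ε / 2 + ε / 2 := by
        rw [hcc]
        exact add_le_add (by simpa [hcc] using hd x) (by rw [dist_comm]; exact hd y)
    _ = ε := by ring

/-- uniform continuity on a compact space, in the `≤` form -/
lemma ucont {h : X → X} (hh : Continuous h) {ρ : ℝ} (hρ : 0 < ρ) :
    ∃ ε > 0, ∀ x y : X, dist x y ≤ ε → dist (h x) (h y) ≤ ρ := by
  have H := CompactSpace.uniformContinuous_of_continuous hh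
  rw [Metric.uniformContinuous_iff] at H
  obtain ⟨ε, hε, H⟩ := H ρ hρ
  exact ⟨ε / 2, by positivity, fun x y hxy => (H (lt_of_le_of_lt hxy (by linarith))).le⟩

/-- joint equicontinuity of finitely many iterates -/
lemma ucont_upto {h : X → X} (hh : Continuous h) {ρ : ℝ} (hρ : 0 < ρ) (N : ℕ) :
    ∃ ε > 0, ∀ x y : X, dist x y ≤ ε → ∀ j ≤ N, dist (h^[j] x) (h^[j] y) ≤ ρ := by
  induction N with
  | zero =>
    exact ⟨ρ, hρ, fun x y hxy j hj => by interval_cases j; simpa using hxy⟩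
  | succ N ih =>
    obtain ⟨ε1, hε1, H1⟩ := ih
    obtain ⟨ε2, hε2, H2⟩ := ucont (hh.iterate (N + 1)) hρ
    refine ⟨min ε1 ε2, lt_min hε1 hε2, fun x y hxy j hj => ?_⟩
    rcases Nat.lt_succ_iff_lt_or_eq.mp (Nat.lt_succ_of_le hj) with h' | rfl
    · exact H1 x y (hxy.trans (min_le_left _ _)) j (Nat.lt_succ_iff.mp h')
    · exact H2 x y (hxy.trans (min_le_right _ _))

/-- Main dynamical lemma: on an infinite compact metric space, for any `δ > 0` there is a
pair of distinct points whose forward orbits stay `δ`-close.  (Equivalently: a positively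
expansive homeomorphism has finite domain.) -/
lemma forward_pair [Infinite X] (g : X ≃ₜ X) {δ : ℝ} (hδ : 0 < δ) :
    ∃ p q : X, p ≠ q ∧ ∀ n : ℕ, dist ((⇑g)^[n] p) ((⇑g)^[n] q) ≤ δ := by
  classical
  by_contra hcon
  push_neg at hcon
  -- hcon : ∀ p q, p ≠ q → ∃ n, δ < dist ((⇑g)^[n] p) ((⇑g)^[n] q)
  -- Step E : backward equicontinuity
  have E : ∀ ρ : ℝ, 0 < ρ → ∃ ε > 0, ∀ x y : X, dist x y ≤ ε →
      ∀ n : ℕ, dist ((⇑g.symm)^[n] x) ((⇑g.symm)^[n] y) ≤ ρ := by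
    intro ρ hρ
    set ρ' := min ρ δ with hρ'def
    have hρ' : 0 < ρ' := lt_min hρ hδ
    have hρ'δ : ρ' ≤ δ := min_le_right _ _
    suffices hS : ∃ ε > 0, ∀ x y : X, dist x y ≤ ε →
        ∀ n : ℕ, dist ((⇑g.symm)^[n] x) ((⇑g.symm)^[n] y) ≤ ρ' by
      obtain ⟨ε, hε, H⟩ := hS
      exact ⟨ε, hε, fun x y hxy n => (H x y hxy n).trans (min_le_left _ _)⟩
    by_contra hE
    push_neg at hE
    have sel : ∀ k : ℕ, ∃ x y : X, dist x y ≤ 1 / (k + 1) ∧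
        ∃ n : ℕ, ρ' < dist ((⇑g.symm)^[n] x) ((⇑g.symm)^[n] y) := by
      intro k
      obtain ⟨x, y, hxy, hn⟩ := hE (1 / (k + 1)) (by positivity)
      exact ⟨x, y, hxy, hn⟩
    choose x y hxy hex using sel
    let n : ℕ → ℕ := fun k => Nat.find (hex k)
    have hnspec : ∀ k, ρ' < dist ((⇑g.symm)^[n k] (x k)) ((⇑g.symm)^[n k] (y k)) :=
      fun k => Nat.find_spec (hex k)
    have hnmin : ∀ k, ∀ j < n k,
        dist ((⇑g.symm)^[j] (x k)) ((⇑g.symm)^[j] (y k)) ≤ ρ' := by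
      intro k j hj
      have := Nat.find_min (hex k) hj
      linarith [not_lt.mp this]
    -- n k → ∞
    have hntend : ∀ N : ℕ, ∃ K : ℕ, ∀ k ≥ K, N < n k := by
      intro N
      obtain ⟨ε, hε, H⟩ := ucont_upto g.symm.continuous hρ' N
      obtain ⟨K, hK⟩ := exists_nat_gt (1 / ε)
      refine ⟨K, fun k hk => ?_⟩
      have hsmall : dist (x k) (y k) ≤ ε := by
        have h1 : (1 : ℝ) / (k + 1) ≤ ε := by
          rw [div_le_iff₀ (by positivity)]
          have : (1:ℝ)/ε < K := hK
          have hKk : (K : ℝ) ≤ k + 1 := by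
            have : (K:ℝ) ≤ k := Nat.cast_le.mpr hk
            linarith
          calc (1:ℝ) = ε * (1/ε) := by field_simp
            _ ≤ ε * (k+1) := by
                apply mul_le_mul_of_nonneg_left _ hε.le
                linarith
        exact (hxy k).trans h1
      by_contra hcontra
      push_neg at hcontra
      exact absurd (H (x k) (y k) hsmall (n k) hcontra) (not_le.mpr (hnspec k))
    set u : ℕ → X := fun k => (⇑g.symm)^[n k] (x k) with hu_def
    set v : ℕ → X := fun k => (⇑g.symm)^[n k] (y k) with hv_def
    obtain ⟨p0, -, φ, hφ, hup⟩ := isCompact_univ.tendsto_subseq (x := u) (fun k => mem_univ _)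
    obtain ⟨q0, -, ψ, hψ, hvq⟩ :=
      isCompact_univ.tendsto_subseq (x := v ∘ φ) (fun k => mem_univ _)
    have hup2 : Tendsto (u ∘ (φ ∘ ψ)) atTop (𝓝 p0) := hup.comp hψ.tendsto_atTop
    have hvq2 : Tendsto (v ∘ (φ ∘ ψ)) atTop (𝓝 q0) := hvq
    have hmono : StrictMono (φ ∘ ψ) := hφ.comp hψ
    have hid : ∀ k, k ≤ φ (ψ k) := fun k => hmono.le_apply
    -- dist p0 q0 ≥ ρ'
    have hdistpq : ρ' ≤ dist p0 q0 := by
      have hlim : Tendsto (fun k => dist (u (φ (ψ k))) (v (φ (ψ k)))) atTop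
          (𝓝 (dist p0 q0)) := hup2.dist hvq2
      refine le_of_tendsto_of_tendsto tendsto_const_nhds hlim ?_
      exact Eventually.of_forall fun k => (hnspec (φ (ψ k))).le
    have hne : p0 ≠ q0 := by
      intro h
      rw [h, dist_self] at hdistpq
      exact absurd hdistpq (not_le.mpr hρ')
    -- forward iterates of (p0, q0) from index 1 on stay ρ'-close
    have hfor : ∀ j : ℕ, 1 ≤ j → dist ((⇑g)^[j] p0) ((⇑g)^[j] q0) ≤ ρ' := by
      intro j hj
      have hcontg : Continuous ((⇑g)^[j]) := g.continuous.iterate j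
      have hlim : Tendsto (fun k => dist ((⇑g)^[j] (u (φ (ψ k)))) ((⇑g)^[j] (v (φ (ψ k)))))
          atTop (𝓝 (dist ((⇑g)^[j] p0) ((⇑g)^[j] q0))) :=
        ((hcontg.tendsto p0).comp hup2).dist ((hcontg.tendsto q0).comp hvq2)
      refine le_of_tendsto hlim ?_
      obtain ⟨K, hK⟩ := hntend j
      filter_upwards [eventually_ge_atTop K] with k hk
      set k' := φ (ψ k)
      have hjk : j ≤ n k' := (hK k' (hk.trans (hid k))).le
      have h1 : (⇑g)^[j] (u k') = (⇑g.symm)^[n k' - j] (x k') := by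
        rw [hu_def]
        exact iter_cancel' g j hjk (x k')
      have h2 : (⇑g)^[j] (v k') = (⇑g.symm)^[n k' - j] (y k') := by
        rw [hv_def]
        exact iter_cancel' g j hjk (y k')
      rw [h1, h2]
      exact hnmin k' (n k' - j) (by omega)
    obtain ⟨nn, hnn⟩ := hcon (g p0) (g q0) (fun h => hne (g.injective h))
    have : dist ((⇑g)^[nn + 1] p0) ((⇑g)^[nn + 1] q0) ≤ ρ' := hfor (nn + 1) (by omega)
    rw [Function.iterate_succ_apply, Function.iterate_succ_apply] at this
    linarith [hρ'δ]
  -- Step R : uniform recurrence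
  have R : ∀ η : ℝ, 0 < η → ∀ N : ℕ, ∃ m : ℕ, N ≤ m ∧ ∀ z : X, dist ((⇑g)^[m] z) z ≤ η := by
    intro η hη N
    obtain ⟨ε, hε, HE⟩ := E (η / 4) (by positivity)
    set r := min ε (η / 4) with hr_def
    have hr : 0 < r := lt_min hε (by positivity)
    obtain ⟨t, htf, hnet⟩ := exists_net (X := X) r hr
    haveI := htf.to_subtype
    choose c hc hcd using hnet
    let P : ℕ → (t → t) := fun k => fun i => ⟨c ((⇑g.symm)^[k] (i : X)), hc _⟩
    obtain ⟨a, b, hab, hPab⟩ :=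
      Finite.exists_ne_map_eq_of_infinite (fun s : ℕ => P ((N + 1) * s))
    wlog hlt : a < b generalizing a b
    · exact this b a hab.symm hPab.symm (by omega)
    set n1 := (N + 1) * a with hn1
    set n2 := (N + 1) * b with hn2
    have hn12 : n1 < n2 := by
      have h1 : (N + 1) * (a + 1) ≤ (N + 1) * b := Nat.mul_le_mul_left _ (by omega)
      have h2 : (N + 1) * (a + 1) = (N + 1) * a + (N + 1) := by ring
      omega
    have hgap : N + 1 ≤ n2 - n1 := by
      have : n1 + (N + 1) ≤ n2 := by
        rw [hn1, hn2]
        calc (N+1) * a + (N+1) = (N+1) * (a+1) := by ring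
          _ ≤ (N+1) * b := Nat.mul_le_mul_left _ (by omega)
      omega
    have key : ∀ z : X, dist ((⇑g.symm)^[n1] z) ((⇑g.symm)^[n2] z) ≤ η := by
      intro z
      have hdz' : dist z (c z) ≤ ε := (hcd z).trans (min_le_left _ _)
      have hiter1 : ∀ k, dist ((⇑g.symm)^[k] z) ((⇑g.symm)^[k] (c z)) ≤ η / 4 :=
        fun k => HE z (c z) hdz' k
      have hmid : c ((⇑g.symm)^[n1] (c z)) = c ((⇑g.symm)^[n2] (c z)) := by
        have := congrFun hPab ⟨c z, hc z⟩
        exact congrArg Subtype.val this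
      calc dist ((⇑g.symm)^[n1] z) ((⇑g.symm)^[n2] z)
          ≤ dist ((⇑g.symm)^[n1] z) ((⇑g.symm)^[n1] (c z)) +
            dist ((⇑g.symm)^[n1] (c z)) ((⇑g.symm)^[n2] (c z)) +
            dist ((⇑g.symm)^[n2] (c z)) ((⇑g.symm)^[n2] z) := dist_triangle4 _ _ _ _
        _ ≤ η / 4 + (r + r) + η / 4 := by
            gcongr
            · exact hiter1 n1
            · calc dist ((⇑g.symm)^[n1] (c z)) ((⇑g.symm)^[n2] (c z))
                  ≤ dist ((⇑g.symm)^[n1] (c z)) (c ((⇑g.symm)^[n1] (c z))) +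
                    dist (c ((⇑g.symm)^[n1] (c z))) ((⇑g.symm)^[n2] (c z)) :=
                    dist_triangle _ _ _
                _ ≤ r + r := by
                    gcongr
                    · exact hcd _
                    · rw [hmid, dist_comm]; exact hcd _
            · rw [dist_comm]; exact hiter1 n2
        _ ≤ η / 4 + (η / 4 + η / 4) + η / 4 := by
            have : r ≤ η / 4 := min_le_right _ _
            linarith
        _ = η := by ring
    refine ⟨n2 - n1, by omega, fun w => ?_⟩
    have h1 : (⇑g.symm)^[n1] ((⇑g)^[n2] w) = (⇑g)^[n2 - n1] w :=
      iter_cancel g n1 hn12.le w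
    have h2 : (⇑g.symm)^[n2] ((⇑g)^[n2] w) = w := by
      have := iter_cancel g n2 (le_refl n2) w
      simpa using this
    have := key ((⇑g)^[n2] w)
    rwa [h1, h2] at this
  -- Final step
  obtain ⟨ε0, hε0, H0⟩ := E δ hδ
  obtain ⟨x0, y0, hxy0, hd0⟩ := exists_close_pair (X := X) (ε0 / 3) (by positivity)
  obtain ⟨nn, hnn⟩ := hcon x0 y0 hxy0
  obtain ⟨m, hm, hmz⟩ := R (ε0 / 3) (by positivity) nn
  have h1 : dist ((⇑g)^[m] x0) ((⇑g)^[m] y0) ≤ ε0 := by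
    calc dist ((⇑g)^[m] x0) ((⇑g)^[m] y0)
        ≤ dist ((⇑g)^[m] x0) x0 + dist x0 y0 + dist y0 ((⇑g)^[m] y0) := dist_triangle4 _ _ _ _
      _ ≤ ε0 / 3 + ε0 / 3 + ε0 / 3 := by
          gcongr
          · exact hmz x0
          · rw [dist_comm]; exact hmz y0
      _ = ε0 := by ring
  have h2 := H0 _ _ h1 (m - nn)
  rw [iter_cancel g (m - nn) (Nat.sub_le m nn), iter_cancel g (m - nn) (Nat.sub_le m nn),
    Nat.sub_sub_self hm] at h2
  linarith

end Aux

lemma hiter_natCast (f : X ≃ₜ X) (n : ℕ) : hiter f (n : ℤ) = (⇑f)^[n] := by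
  ext z
  simp only [hiter, zpow_natCast, Equiv.Perm.coe_pow]
  rfl

lemma hiter_negNatCast (f : X ≃ₜ X) (n : ℕ) : hiter f (-(n : ℤ)) = (⇑f.symm)^[n] := by
  ext z
  simp only [hiter, zpow_neg, zpow_natCast, ← inv_pow, Equiv.Perm.coe_pow]
  rfl

lemma hiter_injective (f : X ≃ₜ X) (k : ℤ) : Function.Injective (hiter f k) :=
  Equiv.injective _

lemma dCard_lt_of_pair {δ : ℝ} {A : Set X} {m : ℕ} (hA : A.encard = m)
    {a b : X} (ha : a ∈ A) (hb : b ∈ A) (hab : a ≠ b) (hd : dist a b ≤ δ) :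
    dCard δ A < (m : ℕ∞) := by
  have hm : 1 ≤ m := by
    by_contra h
    have : m = 0 := by omega
    rw [this] at hA
    simp only [Nat.cast_zero, Set.encard_eq_zero] at hA
    rw [hA] at ha
    exact ha
  have hle : dCard δ A ≤ (m : ℕ∞) - 1 := by
    apply iSup₂_le
    rintro B ⟨hBA, hsep⟩
    have hnotboth : ¬(a ∈ B ∧ b ∈ B) := by
      rintro ⟨haB, hbB⟩
      exact absurd hd (not_le.mpr (hsep a haB b hbB hab))
    by_cases haB : a ∈ B
    · have hbB : b ∉ B := fun h => hnotboth ⟨haB, h⟩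
      have hsub : B ⊆ A \ {b} := fun x hx =>
        ⟨hBA hx, fun h => hbB (by rwa [Set.mem_singleton_iff.mp h] at hx)⟩
      calc B.encard ≤ (A \ {b}).encard := Set.encard_le_encard hsub
        _ = A.encard - 1 := Set.encard_diff_singleton_of_mem hb
        _ = (m : ℕ∞) - 1 := by rw [hA]
    · have hsub : B ⊆ A \ {a} := fun x hx =>
        ⟨hBA hx, fun h => haB (by rwa [Set.mem_singleton_iff.mp h] at hx)⟩
      calc B.encard ≤ (A \ {a}).encard := Set.encard_le_encard hsub
        _ = A.encard - 1 := Set.encard_diff_singleton_of_mem ha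
        _ = (m : ℕ∞) - 1 := by rw [hA]
  have hlt : (m : ℕ∞) - 1 < (m : ℕ∞) := by
    have h1 : ((m - 1 : ℕ) : ℕ∞) = (m : ℕ∞) - 1 := by
      rw [ENat.coe_sub, Nat.cast_one]
    rw [← h1]
    exact_mod_cast Nat.sub_lt (by omega) one_pos
  exact lt_of_le_of_lt hle hlt

theorem stmt10 [CompactSpace X] [Infinite X] (f : X ≃ₜ X) :
    ∀ δ > 0, ∀ m : ℕ, 4 ≤ m → ∃ A : Set X, A.encard = m ∧
      ∀ k : ℤ, dCard δ (hiter f k '' A) < A.encard := by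
  intro δ hδ m hm
  obtain ⟨r, s, hrs, hF⟩ := forward_pair f hδ
  obtain ⟨p, q, hpq, hB⟩ := forward_pair f.symm hδ
  have hcard4 : ({p, q, r, s} : Set X).encard ≤ (m : ℕ∞) := by
    calc ({p, q, r, s} : Set X).encard
        ≤ 4 := by
          calc ({p, q, r, s} : Set X).encard
              ≤ ({q, r, s} : Set X).encard + 1 := Set.encard_insert_le _ _
            _ ≤ (({r, s} : Set X).encard + 1) + 1 := by
                gcongr
                exact Set.encard_insert_le _ _
            _ ≤ ((({s} : Set X).encard + 1) + 1) + 1 := by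
                gcongr
                exact Set.encard_insert_le _ _
            _ = 4 := by rw [Set.encard_singleton]; rfl
      _ ≤ (m : ℕ∞) := by exact_mod_cast Nat.cast_le.mpr hm
  obtain ⟨A, hPA, -, hAcard⟩ := Set.exists_superset_subset_encard_eq
    (Set.subset_univ ({p, q, r, s} : Set X)) hcard4
    (by rw [Set.infinite_univ.encard_eq]; exact le_top)
  refine ⟨A, hAcard, fun k => ?_⟩
  rw [hAcard]
  have himg : (hiter f k '' A).encard = (m : ℕ∞) := by
    rw [(hiter_injective f k).encard_image A, hAcard]
  have hpA : p ∈ A := hPA (by simp)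
  have hqA : q ∈ A := hPA (by simp)
  have hrA : r ∈ A := hPA (by simp)
  have hsA : s ∈ A := hPA (by simp)
  rcases le_or_gt 0 k with hk | hk
  · -- use forward pair (r, s)
    obtain ⟨n, rfl⟩ : ∃ n : ℕ, k = (n : ℤ) := ⟨k.toNat, (Int.toNat_of_nonneg hk).symm⟩
    refine dCard_lt_of_pair himg ⟨r, hrA, rfl⟩ ⟨s, hsA, rfl⟩
      (fun h => hrs (hiter_injective f _ h)) ?_
    rw [hiter_natCast]
    exact hF n
  · -- use backward pair (p, q)
    obtain ⟨n, rfl⟩ : ∃ n : ℕ, k = -(n : ℤ) := by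
      refine ⟨(-k).toNat, ?_⟩
      have : 0 ≤ -k := by omega
      omega
    refine dCard_lt_of_pair himg ⟨p, hpA, rfl⟩ ⟨q, hqA, rfl⟩
      (fun h => hpq (hiter_injective f _ h)) ?_
    rw [hiter_negNatCast]
    exact hB n
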